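/- arXiv:2111.00688 — 2 statements merged into one kernel-verified Lean document; each statement's English description precedes it below -/
import Mathlib

section
/- If x is a favorite edge at time n (i.e., x ∈ 𝒦(n)), then x−1 is a favorite downcrossing site at time n (i.e., ξ_D(x−1,n) = sup_{y∈ℤ} ξ_D(y,n)). -/
/-!
Write `L(y + 1) = ξ_U(y) + ξ_D(y)`, where `ξ_U(y)` counts the upcrossings of the edge
`{y, y + 1}`. Upcrossings and downcrossings of an edge alternate, so `ξ_U(y) - ξ_D(y)` is `1` if
the edge separates `0` from `S n` with `S n` above, `-1` if it separates them with `S n` below,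
and `0` otherwise. Hence `L(y + 1) = 2 ξ_D(y) + ε(y)` with `|ε(y)| ≤ 1`, and the values `1` and
`-1` of `ε` never occur at the same time `n`, since they force `S n > 0` and `S n < 0`. If
`L(x) ≥ L(z + 1)` then `2 (ξ_D(x - 1) - ξ_D(z)) ≥ ε(z) - ε(x - 1) > -2`, so
`ξ_D(x - 1) ≥ ξ_D(z)`.
-/

/-- Number of downcrossings of site `x` by time `n`. -/
def xiD (S : ℕ → ℤ) (x : ℤ) (n : ℕ) : ℕ :=
  ((Finset.Icc 1 n).filter (fun k => S k = x ∧ S (k - 1) = x + 1)).card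

/-- Edge local time. -/
def edgeLT (S : ℕ → ℤ) (x : ℤ) (n : ℕ) : ℕ :=
  ((Finset.Icc 1 n).filter (fun j => S j + S (j - 1) + 1 = 2 * x)).card

def xiU (S : ℕ → ℤ) (x : ℤ) (n : ℕ) : ℕ :=
  ((Finset.Icc 1 n).filter (fun k => S k = x + 1 ∧ S (k - 1) = x)).card

lemma card_filter_Icc_one_succ (P : ℕ → Prop) [DecidablePred P] (n : ℕ) :
    ((Finset.Icc 1 (n + 1)).filter P).card
      = ((Finset.Icc 1 n).filter P).card + if P (n + 1) then 1 else 0 := by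
  simp only [Finset.card_filter]
  exact Finset.sum_Icc_succ_top (by omega) _

section NearestNeighbour

variable {S : ℕ → ℤ}

lemma step_eq_one_or_neg_one (hstep : ∀ k : ℕ, |S (k + 1) - S k| = 1) (k : ℕ) :
    S (k + 1) - S k = 1 ∨ S (k + 1) - S k = -1 :=
  abs_eq zero_le_one |>.mp (hstep k)

lemma edgeLT_add_one (hstep : ∀ k : ℕ, |S (k + 1) - S k| = 1) (y : ℤ) (n : ℕ) :
    edgeLT S (y + 1) n = xiU S y n + xiD S y n := by
  induction n with
  | zero => simp [edgeLT, xiU, xiD]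
  | succ n ih =>
    have := step_eq_one_or_neg_one hstep n
    simp only [edgeLT, xiU, xiD, card_filter_Icc_one_succ, Nat.add_sub_cancel] at ih ⊢
    split_ifs <;> omega

lemma xiU_sub_xiD (hstep : ∀ k : ℕ, |S (k + 1) - S k| = 1) (hS0 : S 0 = 0)
    (y : ℤ) (n : ℕ) :
    (xiU S y n : ℤ) - xiD S y n =
      (if 0 ≤ y ∧ y < S n then 1 else 0) - (if S n ≤ y ∧ y < 0 then 1 else 0) := by
  induction n with
  | zero => simp [xiU, xiD, hS0]
  | succ n ih =>
    have := step_eq_one_or_neg_one hstep n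
    simp only [xiU, xiD, card_filter_Icc_one_succ, Nat.add_sub_cancel] at ih ⊢
    push_cast
    split_ifs at ih ⊢ <;> omega

lemma edgeLT_add_one_eq_two_mul_xiD (hstep : ∀ k : ℕ, |S (k + 1) - S k| = 1) (hS0 : S 0 = 0)
    (y : ℤ) (n : ℕ) :
    (edgeLT S (y + 1) n : ℤ) = 2 * xiD S y n
      + (if 0 ≤ y ∧ y < S n then 1 else 0) - (if S n ≤ y ∧ y < 0 then 1 else 0) := by
  have := xiU_sub_xiD hstep hS0 y n
  rw [edgeLT_add_one hstep]
  push_cast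
  linarith

end NearestNeighbour

/-- If `x` is a favorite edge at time `n`, then `x - 1` is a favorite downcrossing
site at time `n`. -/
theorem stmt2 (S : ℕ → ℤ) (hS0 : S 0 = 0)
    (hstep : ∀ k : ℕ, |S (k + 1) - S k| = 1) (x : ℤ) (n : ℕ)
    (hx : ∀ y : ℤ, edgeLT S y n ≤ edgeLT S x n) :
    ∀ y : ℤ, xiD S y n ≤ xiD S (x - 1) n := by
  intro z
  have hLz : (edgeLT S (z + 1) n : ℤ) ≤ edgeLT S (x - 1 + 1) n := by
    rw [sub_add_cancel]
    exact_mod_cast hx (z + 1)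
  rw [edgeLT_add_one_eq_two_mul_xiD hstep hS0,
    edgeLT_add_one_eq_two_mul_xiD hstep hS0] at hLz
  split_ifs at hLz <;> omega
end

section
/- There exist positive constants c and C such that for all integers h ≥ 100 and all integers i, j in the interval ((h − 10√h)/2, (h + 10√h)/2), one has c·h^{−1/2} ≤ π(i,j) ≤ C·h^{−1/2}, where π(i,j) = 2^{−i−j}(i+j−1)!/((i−1)! j!). -/
open Real Filter Topology

lemma stirl_lb (m : ℕ) (hm : 1 ≤ m) :
    Real.sqrt Real.pi ≤ Stirling.stirlingSeq m := by
  obtain ⟨k, rfl⟩ := Nat.exists_eq_add_of_le hm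
  have hA : Antitone (Stirling.stirlingSeq ∘ Nat.succ) := Stirling.stirlingSeq'_antitone
  have hT : Tendsto (Stirling.stirlingSeq ∘ Nat.succ) atTop (𝓝 (Real.sqrt Real.pi)) :=
    Stirling.tendsto_stirlingSeq_sqrt_pi.comp (tendsto_add_atTop_nat 1)
  have := hA.le_of_tendsto hT k
  simpa [Nat.succ_eq_add_one, Nat.add_comm] using this

lemma stirl_ub (m : ℕ) (hm : 1 ≤ m) :
    Stirling.stirlingSeq m ≤ Real.exp 1 / Real.sqrt 2 := by
  obtain ⟨k, rfl⟩ := Nat.exists_eq_add_of_le hm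
  have hA : Antitone (Stirling.stirlingSeq ∘ Nat.succ) := Stirling.stirlingSeq'_antitone
  have := hA (Nat.zero_le k)
  simpa [Stirling.stirlingSeq_one, Nat.succ_eq_add_one, Nat.add_comm] using this

lemma stirling_lower (m : ℕ) (hm : 1 ≤ m) :
    2 * Real.sqrt m * ((m : ℝ) ^ m / Real.exp 1 ^ m) ≤ (Nat.factorial m : ℝ) := by
  have h1 := stirl_lb m hm
  have hm0 : (0:ℝ) < m := by exact_mod_cast hm
  have hden : (0:ℝ) < Real.sqrt (2 * m) * ((m : ℝ) / Real.exp 1) ^ m := by positivity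
  have hfac : (Nat.factorial m : ℝ) =
      Stirling.stirlingSeq m * (Real.sqrt (2 * m) * ((m : ℝ) / Real.exp 1) ^ m) := by
    rw [Stirling.stirlingSeq]
    field_simp
  rw [hfac]
  have h2 : Real.sqrt (2 * m) = Real.sqrt 2 * Real.sqrt m := Real.sqrt_mul (by norm_num) _
  have h3 : ((m : ℝ) / Real.exp 1) ^ m = (m : ℝ) ^ m / Real.exp 1 ^ m := div_pow _ _ _
  have hππ : (2:ℝ) ≤ Real.sqrt Real.pi * Real.sqrt 2 := by
    rw [← Real.sqrt_mul Real.pi_nonneg]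
    have : (4:ℝ) ≤ Real.pi * 2 := by nlinarith [Real.pi_gt_three]
    calc (2:ℝ) = Real.sqrt 4 := by
          rw [show (4:ℝ) = 2^2 by norm_num, Real.sqrt_sq (by norm_num)]
      _ ≤ _ := Real.sqrt_le_sqrt this
  calc 2 * Real.sqrt m * ((m : ℝ) ^ m / Real.exp 1 ^ m)
      ≤ (Real.sqrt Real.pi * Real.sqrt 2) * Real.sqrt m * ((m : ℝ) ^ m / Real.exp 1 ^ m) := by
        have : (0:ℝ) ≤ Real.sqrt m * ((m : ℝ) ^ m / Real.exp 1 ^ m) := by positivity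
        nlinarith
    _ = Real.sqrt Real.pi * (Real.sqrt (2*m) * ((m : ℝ) / Real.exp 1) ^ m) := by
        rw [h2, h3]; ring
    _ ≤ _ := by
        have := mul_le_mul_of_nonneg_right h1 hden.le
        linarith

lemma stirling_upper (m : ℕ) (hm : 1 ≤ m) :
    (Nat.factorial m : ℝ) ≤ 3 * Real.sqrt m * ((m : ℝ) ^ m / Real.exp 1 ^ m) := by
  have h1 := stirl_ub m hm
  have hm0 : (0:ℝ) < m := by exact_mod_cast hm
  have hden : (0:ℝ) < Real.sqrt (2 * m) * ((m : ℝ) / Real.exp 1) ^ m := by positivity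
  have hfac : (Nat.factorial m : ℝ) =
      Stirling.stirlingSeq m * (Real.sqrt (2 * m) * ((m : ℝ) / Real.exp 1) ^ m) := by
    rw [Stirling.stirlingSeq]; field_simp
  rw [hfac]
  have h2 : Real.sqrt (2 * m) = Real.sqrt 2 * Real.sqrt m := Real.sqrt_mul (by norm_num) _
  have h3 : ((m : ℝ) / Real.exp 1) ^ m = (m : ℝ) ^ m / Real.exp 1 ^ m := div_pow _ _ _
  have he : Real.exp 1 ≤ 3 := by
    have := Real.exp_one_lt_d9; linarith
  have hs2 : (0:ℝ) < Real.sqrt 2 := by positivity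
  calc Stirling.stirlingSeq m * (Real.sqrt (2*m) * ((m : ℝ) / Real.exp 1) ^ m)
      ≤ (Real.exp 1 / Real.sqrt 2) * (Real.sqrt (2*m) * ((m : ℝ) / Real.exp 1) ^ m) :=
        mul_le_mul_of_nonneg_right h1 hden.le
    _ = Real.exp 1 * Real.sqrt m * ((m : ℝ) ^ m / Real.exp 1 ^ m) := by
        rw [h2, h3]; field_simp
    _ ≤ _ := by
        have : (0:ℝ) ≤ Real.sqrt m * ((m : ℝ) ^ m / Real.exp 1 ^ m) := by positivity
        nlinarith

lemma ent_lb (x y : ℝ) (hx : 0 < x) (hy : 0 < y) :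
    (x + y) * Real.log ((x + y) / 2) ≤ x * Real.log x + y * Real.log y := by
  have hn : 0 < x + y := by linarith
  have l1 : Real.log ((x+y)/2) - Real.log x ≤ (x+y)/(2*x) - 1 := by
    have := Real.log_le_sub_one_of_pos (show (0:ℝ) < (x+y)/2/x by positivity)
    rw [Real.log_div (by positivity) hx.ne'] at this
    calc Real.log ((x+y)/2) - Real.log x ≤ (x+y)/2/x - 1 := this
      _ = (x+y)/(2*x) - 1 := by ring_nf
  have l2 : Real.log ((x+y)/2) - Real.log y ≤ (x+y)/(2*y) - 1 := by
    have := Real.log_le_sub_one_of_pos (show (0:ℝ) < (x+y)/2/y by positivity)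
    rw [Real.log_div (by positivity) hy.ne'] at this
    calc Real.log ((x+y)/2) - Real.log y ≤ (x+y)/2/y - 1 := this
      _ = (x+y)/(2*y) - 1 := by ring_nf
  have m1 := mul_le_mul_of_nonneg_left l1 hx.le
  have m2 := mul_le_mul_of_nonneg_left l2 hy.le
  have e1 : x * ((x+y)/(2*x) - 1) = (x+y)/2 - x := by field_simp
  have e2 : y * ((x+y)/(2*y) - 1) = (x+y)/2 - y := by field_simp
  rw [e1] at m1; rw [e2] at m2
  nlinarith

lemma ent_ub (x y : ℝ) (hx : 0 < x) (hy : 0 < y) :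
    x * Real.log x + y * Real.log y ≤
      (x + y) * Real.log ((x + y) / 2) + (x - y) ^ 2 / (x + y) := by
  have hn : 0 < x + y := by linarith
  have l1 : Real.log x - Real.log ((x+y)/2) ≤ 2*x/(x+y) - 1 := by
    have := Real.log_le_sub_one_of_pos (show (0:ℝ) < x / ((x+y)/2) by positivity)
    rw [Real.log_div hx.ne' (by positivity)] at this
    calc Real.log x - Real.log ((x+y)/2) ≤ x/((x+y)/2) - 1 := this
      _ = 2*x/(x+y) - 1 := by rw [div_div_eq_mul_div]; ring_nf
  have l2 : Real.log y - Real.log ((x+y)/2) ≤ 2*y/(x+y) - 1 := by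
    have := Real.log_le_sub_one_of_pos (show (0:ℝ) < y / ((x+y)/2) by positivity)
    rw [Real.log_div hy.ne' (by positivity)] at this
    calc Real.log y - Real.log ((x+y)/2) ≤ y/((x+y)/2) - 1 := this
      _ = 2*y/(x+y) - 1 := by rw [div_div_eq_mul_div]; ring_nf
  have m1 := mul_le_mul_of_nonneg_left l1 hx.le
  have m2 := mul_le_mul_of_nonneg_left l2 hy.le
  have e3 : x * (2*x/(x+y) - 1) + y * (2*y/(x+y) - 1) = (x - y)^2/(x+y) := by
    field_simp; ring
  nlinarith

lemma pow_ent_lb (a b : ℕ) (ha : 1 ≤ a) (hb : 1 ≤ b) :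
    (((a : ℝ) + b) / 2) ^ (a + b) ≤ (a : ℝ) ^ a * (b : ℝ) ^ b := by
  have hA : (0:ℝ) < a := by exact_mod_cast ha
  have hB : (0:ℝ) < b := by exact_mod_cast hb
  have hL : (0:ℝ) < (((a : ℝ) + b) / 2) ^ (a + b) := by positivity
  have hR : (0:ℝ) < (a : ℝ) ^ a * (b : ℝ) ^ b := by positivity
  rw [← Real.log_le_log_iff hL hR, Real.log_mul (by positivity) (by positivity),
    Real.log_pow, Real.log_pow, Real.log_pow]
  push_cast
  have := ent_lb (a:ℝ) (b:ℝ) hA hB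
  linarith

lemma pow_ent_ub (a b : ℕ) (ha : 1 ≤ a) (hb : 1 ≤ b) :
    (a : ℝ) ^ a * (b : ℝ) ^ b ≤
      (((a : ℝ) + b) / 2) ^ (a + b) * Real.exp (((a : ℝ) - b) ^ 2 / ((a : ℝ) + b)) := by
  have hA : (0:ℝ) < a := by exact_mod_cast ha
  have hB : (0:ℝ) < b := by exact_mod_cast hb
  have hL : (0:ℝ) < (a : ℝ) ^ a * (b : ℝ) ^ b := by positivity
  have hR : (0:ℝ) < (((a : ℝ) + b) / 2) ^ (a + b) *
      Real.exp (((a : ℝ) - b) ^ 2 / ((a : ℝ) + b)) := by positivity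
  rw [← Real.log_le_log_iff hL hR, Real.log_mul (by positivity) (by positivity),
    Real.log_mul (by positivity) (Real.exp_ne_zero _), Real.log_exp,
    Real.log_pow, Real.log_pow, Real.log_pow]
  push_cast
  have := ent_ub (a:ℝ) (b:ℝ) hA hB
  linarith

lemma sq_le_imp {x y : ℝ} (hx : 0 ≤ x) (hy : 0 ≤ y) (hsq : x^2 ≤ y^2) : x ≤ y := by
  nlinarith

lemma claim1_aux {hr A B N : ℝ} (hh : 100 ≤ hr) (hB0 : 0 ≤ B)
    (hA_hi : A ≤ 3*hr/4) (hB_hi : B ≤ 3*hr/4)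
    (hN_lo : 2*hr/5 ≤ N) : A * B ≤ 4 * (hr * N) := by
  nlinarith [mul_le_mul hA_hi hB_hi hB0 (by linarith : (0:ℝ) ≤ 3*hr/4),
    mul_le_mul_of_nonneg_left hN_lo (by linarith : (0:ℝ) ≤ hr)]

lemma claim2_aux {hr A B N : ℝ} (hh : 100 ≤ hr) (hA0 : 0 ≤ A)
    (hA_lo : hr/5 ≤ A) (hB_lo : hr/4 ≤ B)
    (hN_hi : N ≤ 3*hr/2) : hr * N ≤ 36 * (A * B) := by
  nlinarith [mul_le_mul hA_lo hB_lo (by linarith : (0:ℝ) ≤ hr/4) hA0,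
    mul_le_mul_of_nonneg_left hN_hi (by linarith : (0:ℝ) ≤ hr)]


/-- Transition kernel `π(i,j) = 2^{-i-j} (i+j-1)!/((i-1)! j!)` for `i ≥ 1`,
and `π(0,j) = δ_0(j)`. -/
noncomputable def piK (i j : ℕ) : ℝ :=
  if i = 0 then (if j = 0 then 1 else 0)
  else (1 / 2 : ℝ) ^ (i + j) * (Nat.factorial (i + j - 1)) /
    ((Nat.factorial (i - 1)) * (Nat.factorial j))

set_option maxHeartbeats 2000000 in
/-- There exist positive constants `c, C` such that for all `h ≥ 100` and all
`i, j ∈ ((h - 10√h)/2, (h + 10√h)/2)`, one has `c h^{-1/2} ≤ π(i,j) ≤ C h^{-1/2}`. -/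
theorem stmt6 :
    ∃ c C : ℝ, 0 < c ∧ 0 < C ∧
      ∀ h i j : ℕ, 100 ≤ h →
        ((h : ℝ) - 10 * Real.sqrt h) / 2 < (i : ℝ) →
        (i : ℝ) < ((h : ℝ) + 10 * Real.sqrt h) / 2 →
        ((h : ℝ) - 10 * Real.sqrt h) / 2 < (j : ℝ) →
        (j : ℝ) < ((h : ℝ) + 10 * Real.sqrt h) / 2 →
        c / Real.sqrt h ≤ piK i j ∧ piK i j ≤ C / Real.sqrt h := by
  refine ⟨Real.exp (-600), 10, Real.exp_pos _, by norm_num, ?_⟩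
  intro h i j hh hi1 hi2 hj1 hj2
  have hh100 : (100:ℝ) ≤ (h:ℝ) := by exact_mod_cast hh
  set s := Real.sqrt (h:ℝ) with hs
  have hs2 : s ^ 2 = (h:ℝ) := Real.sq_sqrt (by linarith)
  have hs10 : 10 ≤ s := by
    nlinarith [Real.sqrt_nonneg (h:ℝ), hs2]
  have hspos : (0:ℝ) < s := by linarith
  -- i, j ≥ 1
  have hi0 : 1 ≤ i := by
    rcases Nat.eq_zero_or_pos i with h0 | h0
    · exfalso; rw [h0] at hi1; push_cast at hi1; nlinarith
    · exact h0
  have hj0 : 1 ≤ j := by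
    rcases Nat.eq_zero_or_pos j with h0 | h0
    · exfalso; rw [h0] at hj1; push_cast at hj1; nlinarith
    · exact h0
  have hexp600 : (0:ℝ) < Real.exp (-600) := Real.exp_pos _
  by_cases hsm : h ≤ 400
  · -- small h case
    have hh4 : (h:ℝ) ≤ 400 := by exact_mod_cast hsm
    have hs20 : s ≤ 20 := by nlinarith [Real.sqrt_nonneg (h:ℝ)]
    have hi300 : i ≤ 299 := by
      have : (i:ℝ) < 300 := by linarith
      exact_mod_cast Nat.lt_succ_iff.mp (by exact_mod_cast (show (i:ℝ) < (300:ℕ) by push_cast; linarith))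
    have hj300 : j ≤ 299 := by
      exact_mod_cast Nat.lt_succ_iff.mp (by exact_mod_cast (show (j:ℝ) < (300:ℕ) by push_cast; linarith))
    obtain ⟨m, hm⟩ : ∃ m, i + j = m + 1 := ⟨i + j - 1, by omega⟩
    have hm1 : i + j - 1 = m := by omega
    set K := Nat.choose m j with hK
    have hK1 : 1 ≤ K := Nat.choose_pos (by omega)
    have hfact : (Nat.factorial m : ℝ) =
        (K : ℝ) * (Nat.factorial j : ℝ) * (Nat.factorial (i-1) : ℝ) := by
      have := Nat.choose_mul_factorial_mul_factorial (show j ≤ m by omega)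
      rw [show m - j = i - 1 by omega] at this
      exact_mod_cast this.symm
    have hpiK : piK i j = (1/2:ℝ) ^ (m + 1) * (K : ℝ) := by
      unfold piK
      rw [if_neg (by omega), hm, Nat.add_sub_cancel, hfact]
      have h1 : (Nat.factorial (i-1) : ℝ) ≠ 0 := by positivity
      have h2 : (Nat.factorial j : ℝ) ≠ 0 := by positivity
      field_simp
    have hK2 : (K:ℝ) ≤ 2 ^ m := by
      have h1 : K ≤ ∑ k ∈ Finset.range (m + 1), Nat.choose m k :=
        Finset.single_le_sum (f := fun k => Nat.choose m k)
          (fun _ _ => Nat.zero_le _) (Finset.mem_range.mpr (by omega))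
      rw [Nat.sum_range_choose] at h1
      exact_mod_cast h1
    constructor
    · -- lower
      have c1 : Real.exp (-600) / s ≤ Real.exp (-600) :=
        div_le_self hexp600.le (by linarith)
      have c2 : Real.exp (-600) ≤ (1/2:ℝ) ^ 598 := by
        have he2 : Real.exp (-1) ≤ 1/2 := by
          rw [Real.exp_neg]
          rw [inv_le_comm₀ (Real.exp_pos 1) (by norm_num)]
          have := Real.exp_one_gt_d9
          linarith
        have h0 : Real.exp (-600) ≤ Real.exp (-598) := Real.exp_le_exp.mpr (by norm_num)
        have h598 : Real.exp (-598) = Real.exp (-1) ^ 598 := by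
          rw [← Real.exp_nat_mul]; norm_num
        calc Real.exp (-600) ≤ Real.exp (-598) := h0
          _ = Real.exp (-1) ^ 598 := h598
          _ ≤ (1/2:ℝ) ^ 598 := pow_le_pow_left₀ (Real.exp_pos _).le he2 598
      have c3 : (1/2:ℝ) ^ 598 ≤ (1/2:ℝ) ^ (m + 1) :=
        pow_le_pow_of_le_one (by norm_num) (by norm_num) (by omega)
      have c4 : (1/2:ℝ) ^ (m + 1) ≤ (1/2:ℝ) ^ (m + 1) * (K:ℝ) :=
        le_mul_of_one_le_right (by positivity) (by exact_mod_cast hK1)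
      rw [hpiK]; linarith
    · -- upper
      have c1 : piK i j ≤ 1/2 := by
        rw [hpiK]
        have he : (1/2:ℝ) ^ (m + 1) * (2:ℝ) ^ m = 1/2 := by
          rw [pow_succ, mul_comm ((1/2:ℝ) ^ m) (1/2:ℝ), mul_assoc, ← mul_pow]
          norm_num
        calc (1/2:ℝ) ^ (m + 1) * (K:ℝ) ≤ (1/2:ℝ) ^ (m + 1) * 2 ^ m := by
              have : (0:ℝ) < (1/2:ℝ) ^ (m + 1) := by positivity
              nlinarith
          _ = 1/2 := he
      have c2 : (1/2:ℝ) ≤ 10 / s := by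
        rw [le_div_iff₀ hspos]; linarith
      linarith
  · -- large h case
    push_neg at hsm
    have h401 : 401 ≤ h := by omega
    have hh401 : (401:ℝ) ≤ (h:ℝ) := by exact_mod_cast h401
    have hs20 : 20 ≤ s := by
      have h1 : Real.sqrt 400 ≤ s := Real.sqrt_le_sqrt (by linarith)
      rwa [show (400:ℝ) = 20^2 by norm_num, Real.sqrt_sq (by norm_num)] at h1
    have hss : s * s = (h:ℝ) := by rw [← hs2]; ring
    have h10s : 10 * s ≤ (h:ℝ) / 2 := by
      have h1 : 20 * s ≤ s * s := mul_le_mul_of_nonneg_right hs20 hspos.le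
      linarith
    have hi_lo : (h:ℝ)/4 < (i:ℝ) := by linarith
    have hi_hi : (i:ℝ) < 3*(h:ℝ)/4 := by linarith
    have hj_lo : (h:ℝ)/4 < (j:ℝ) := by linarith
    have hj_hi : (j:ℝ) < 3*(h:ℝ)/4 := by linarith
    have hi2' : 2 ≤ i := by
      have h1 : (1:ℝ) < (i:ℝ) := by linarith
      have h2 : 1 < i := by exact_mod_cast h1
      omega
    set a := i - 1 with ha
    set b := j with hb
    set n := a + b with hn
    have hna : i + j = n + 1 := by omega
    have ha1 : 1 ≤ a := by omega
    have hb1 : 1 ≤ b := by omega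
    have hn1 : 1 ≤ n := by omega
    set A := (a:ℝ) with hA
    set B := (b:ℝ) with hB
    set N := (n:ℝ) with hN
    have hAi : A = (i:ℝ) - 1 := by rw [hA, ha]; push_cast [hi0]; ring
    have hNr : N = A + B := by rw [hN, hn]; push_cast; ring
    have hA_lo : (h:ℝ)/5 ≤ A := by rw [hAi]; linarith
    have hA_hi : A ≤ 3*(h:ℝ)/4 := by rw [hAi]; linarith
    have hB_lo : (h:ℝ)/4 ≤ B := hj_lo.le
    have hB_hi : B ≤ 3*(h:ℝ)/4 := hj_hi.le
    have hApos : (0:ℝ) < A := by linarith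
    have hBpos : (0:ℝ) < B := by linarith
    have hN_lo : 2*(h:ℝ)/5 ≤ N := by rw [hNr]; linarith
    have hN_hi : N ≤ 3*(h:ℝ)/2 := by rw [hNr]; linarith
    have hNpos : (0:ℝ) < N := by linarith
    -- difference bound
    have hdiff : (A - B)^2 ≤ 102 * (h:ℝ) := by
      have h4 : |A - B| ≤ 10*s + 1 := by
        rw [abs_le]; constructor <;> rw [hAi] <;> [linarith; linarith]
      have h5 : (A - B)^2 ≤ (10*s + 1)^2 := by
        rw [← sq_abs]
        exact pow_le_pow_left₀ (abs_nonneg _) h4 2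
      have h6 : (10*s + 1)^2 = 100*s^2 + 20*s + 1 := by ring
      rw [h6, hs2] at h5
      linarith
    have hExp : (A - B)^2 / (A + B) ≤ 260 := by
      rw [div_le_iff₀ (by rw [← hNr]; exact hNpos)]
      have : 260 * (A + B) = 260 * N := by rw [hNr]
      rw [this]
      linarith
    -- sqrt quantities
    set ta := Real.sqrt A with hta
    set tb := Real.sqrt B with htb
    set tn := Real.sqrt N with htn
    have hta2 : ta^2 = A := Real.sq_sqrt hApos.le
    have htb2 : tb^2 = B := Real.sq_sqrt hBpos.le
    have htn2 : tn^2 = N := Real.sq_sqrt hNpos.le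
    have htapos : 0 < ta := Real.sqrt_pos.mpr hApos
    have htbpos : 0 < tb := Real.sqrt_pos.mpr hBpos
    have htnpos : 0 < tn := Real.sqrt_pos.mpr hNpos
    have claim1 : ta * tb ≤ 2 * (s * tn) := by
      apply sq_le_imp (by positivity) (by positivity)
      have e1 : (ta * tb)^2 = A * B := by rw [mul_pow, hta2, htb2]
      have e2 : (2 * (s * tn))^2 = 4 * ((h:ℝ) * N) := by
        rw [mul_pow, mul_pow, hs2, htn2]; ring
      rw [e1, e2]
      exact claim1_aux hh100 hBpos.le hA_hi hB_hi hN_lo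
    have claim2 : s * tn ≤ 6 * (ta * tb) := by
      apply sq_le_imp (by positivity) (by positivity)
      have e1 : (s * tn)^2 = (h:ℝ) * N := by rw [mul_pow, hs2, htn2]
      have e2 : (6 * (ta * tb))^2 = 36 * (A * B) := by
        rw [mul_pow, mul_pow, hta2, htb2]; ring
      rw [e1, e2]
      exact claim2_aux hh100 hApos.le hA_lo hB_lo hN_hi
    -- abbreviations
    set E := Real.exp 1 with hE
    have hEpos : 0 < E := Real.exp_pos 1
    set EA := E ^ a with hEA
    set EB := E ^ b with hEB
    have hEApos : 0 < EA := by positivity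
    have hEBpos : 0 < EB := by positivity
    have hEn : E ^ n = EA * EB := by rw [hEA, hEB, hn, pow_add]
    set Q := N ^ n with hQ
    have hQpos : 0 < Q := by positivity
    set u := (2:ℝ) ^ n with hu
    have hupos : (0:ℝ) < u := by positivity
    set PA := A ^ a with hPA
    set PB := B ^ b with hPB
    have hPApos : 0 < PA := by positivity
    have hPBpos : 0 < PB := by positivity
    -- Stirling bounds
    have fn_lo : 2 * tn * (Q / (EA * EB)) ≤ (Nat.factorial n : ℝ) := by
      have := stirling_lower n hn1
      rw [← hN, ← htn, ← hQ, hEn] at this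
      exact this
    have fn_hi : (Nat.factorial n : ℝ) ≤ 3 * tn * (Q / (EA * EB)) := by
      have := stirling_upper n hn1
      rw [← hN, ← htn, ← hQ, hEn] at this
      exact this
    have fa_lo : 2 * ta * (PA / EA) ≤ (Nat.factorial a : ℝ) := by
      have := stirling_lower a ha1
      rw [← hA, ← hta, ← hPA, ← hEA] at this
      exact this
    have fa_hi : (Nat.factorial a : ℝ) ≤ 3 * ta * (PA / EA) := by
      have := stirling_upper a ha1
      rw [← hA, ← hta, ← hPA, ← hEA] at this
      exact this
    have fb_lo : 2 * tb * (PB / EB) ≤ (Nat.factorial b : ℝ) := by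
      have := stirling_lower b hb1
      rw [← hB, ← htb, ← hPB, ← hEB] at this
      exact this
    have fb_hi : (Nat.factorial b : ℝ) ≤ 3 * tb * (PB / EB) := by
      have := stirling_upper b hb1
      rw [← hB, ← htb, ← hPB, ← hEB] at this
      exact this
    have hFapos : (0:ℝ) < (Nat.factorial a : ℝ) := by positivity
    have hFbpos : (0:ℝ) < (Nat.factorial b : ℝ) := by positivity
    have hFnpos : (0:ℝ) < (Nat.factorial n : ℝ) := by positivity
    -- entropy bounds
    have h3QU : ((A + B)/2) ^ n = Q / u := by
      rw [← hNr, div_pow, ← hQ, ← hu]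
    have ent_hi : PA * PB ≤ (Q / u) * Real.exp 260 := by
      have h1 := pow_ent_ub a b ha1 hb1
      rw [← hA, ← hB, ← hPA, ← hPB, ← hn] at h1
      have h2 : Real.exp ((A - B)^2 / (A + B)) ≤ Real.exp 260 := Real.exp_le_exp.mpr hExp
      calc PA * PB ≤ ((A + B)/2) ^ n * Real.exp ((A - B)^2 / (A + B)) := h1
        _ ≤ ((A + B)/2) ^ n * Real.exp 260 :=
            mul_le_mul_of_nonneg_left h2 (by positivity)
        _ = (Q / u) * Real.exp 260 := by rw [h3QU]
    have ent_lo : Q / u ≤ PA * PB := by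
      have h1 := pow_ent_lb a b ha1 hb1
      rw [← hA, ← hB, ← hPA, ← hPB, ← hn] at h1
      rw [← h3QU]; exact h1
    -- piK formula
    have hpiK : piK i j = (1/2:ℝ) ^ (n + 1) *
        (Nat.factorial n : ℝ) / ((Nat.factorial a : ℝ) * (Nat.factorial b : ℝ)) := by
      unfold piK
      rw [if_neg (by omega), hna, Nat.add_sub_cancel]
    have hhalf : (1/2:ℝ) ^ (n + 1) = 1 / (2 * u) := by
      rw [pow_succ, hu, one_div_pow]
      ring
    rw [hpiK, hhalf]
    constructor
    · -- lower bound
      rw [div_le_div_iff₀ hspos (by positivity)]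
      have H18 : Real.exp (-600) * Real.exp 260 * 9 * (ta * tb) ≤ tn * s := by
        have hE340 : Real.exp (-600) * Real.exp 260 = Real.exp (-340) := by
          rw [← Real.exp_add]; norm_num
        rw [hE340]
        have h1 : Real.exp (-340) ≤ 1/18 := by
          have h2 : (18:ℝ) ≤ Real.exp 340 := by
            have := Real.add_one_le_exp (340:ℝ)
            linarith
          rw [Real.exp_neg, inv_le_comm₀ (Real.exp_pos _) (by norm_num)]
          linarith
        have h3 : Real.exp (-340) * 9 * (ta * tb) ≤ (1/18) * 9 * (ta * tb) := by
          apply mul_le_mul_of_nonneg_right _ (by positivity)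
          apply mul_le_mul_of_nonneg_right h1 (by norm_num)
        have h4 : (1/18:ℝ) * 9 * (ta * tb) = (1/2) * (ta * tb) := by ring
        have h5 : (1/2:ℝ) * (ta * tb) ≤ (1/2) * (2 * (s * tn)) :=
          mul_le_mul_of_nonneg_left claim1 (by norm_num)
        have h6 : (1/2:ℝ) * (2 * (s * tn)) = tn * s := by ring
        linarith
      calc Real.exp (-600) * ((Nat.factorial a : ℝ) * (Nat.factorial b : ℝ))
          ≤ Real.exp (-600) * ((3 * ta * (PA / EA)) * (3 * tb * (PB / EB))) :=
            mul_le_mul_of_nonneg_left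
              (mul_le_mul fa_hi fb_hi hFbpos.le (by positivity)) hexp600.le
        _ = Real.exp (-600) * 9 * (ta * tb) * ((PA * PB) / (EA * EB)) := by
            field_simp; ring
        _ ≤ Real.exp (-600) * 9 * (ta * tb) * (((Q / u) * Real.exp 260) / (EA * EB)) :=
            mul_le_mul_of_nonneg_left
              ((div_le_div_iff_of_pos_right (by positivity)).mpr ent_hi) (by positivity)
        _ = (Real.exp (-600) * Real.exp 260 * 9 * (ta * tb)) * (Q / (u * (EA * EB))) := by
            field_simp
        _ ≤ (tn * s) * (Q / (u * (EA * EB))) :=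
            mul_le_mul_of_nonneg_right H18 (by positivity)
        _ = (1 / (2 * u) * (2 * tn * (Q / (EA * EB)))) * s := by
            field_simp
        _ ≤ (1 / (2 * u) * (Nat.factorial n : ℝ)) * s := by
            apply mul_le_mul_of_nonneg_right _ hspos.le
            exact mul_le_mul_of_nonneg_left fn_lo (by positivity)
    · -- upper bound
      rw [div_le_div_iff₀ (by positivity) hspos]
      have H6 : (3/2) * (tn * s) ≤ 40 * (ta * tb) := by
        have hpos : 0 ≤ ta * tb := mul_nonneg htapos.le htbpos.le
        linarith [claim2]
      calc (1 / (2 * u) * (Nat.factorial n : ℝ)) * s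
          ≤ (1 / (2 * u) * (3 * tn * (Q / (EA * EB)))) * s := by
            apply mul_le_mul_of_nonneg_right _ hspos.le
            exact mul_le_mul_of_nonneg_left fn_hi (by positivity)
        _ = ((3/2) * (tn * s)) * (Q / (u * (EA * EB))) := by
            field_simp
        _ ≤ (40 * (ta * tb)) * (Q / (u * (EA * EB))) :=
            mul_le_mul_of_nonneg_right H6 (by positivity)
        _ = 10 * ((2 * ta * (PA / EA)) * (2 * tb * (PB / EB))) * ((Q/u) / (PA * PB)) := by
            field_simp; ring
        _ ≤ 10 * ((2 * ta * (PA / EA)) * (2 * tb * (PB / EB))) * 1 := by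
            apply mul_le_mul_of_nonneg_left _ (by positivity)
            rw [div_le_one (by positivity)]
            exact ent_lo
        _ ≤ 10 * ((Nat.factorial a : ℝ) * (Nat.factorial b : ℝ)) := by
            rw [mul_one]
            apply mul_le_mul_of_nonneg_left _ (by norm_num)
            exact mul_le_mul fa_lo fb_lo (by positivity) hFapos.le
end
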